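/- arXiv:1408.2593 — 6 statements merged into one kernel-verified Lean document; each statement's English description precedes it below -/
import Mathlib

section
/- Let G be a simplicial clique covered graph (SCCG) with connection set W, let F be a field, and let f : V(G) → F be a well-covered weighting of G. Then for each simplicial clique C_i ∈ C(G), f is constant on the set C_i − W_i of simplicial vertices of C_i (where W_i = C_i ∩ W): that is, f(u) = f(v) for all u, v ∈ C_i − W_i. -/
open Finset

open scoped Classical

/-- The closed neighborhood `N[v]` of a vertex `v`: `v` together with its neighbors. -/
noncomputable def clNbhd {V : Type*} [Fintype V] (G : SimpleGraph V) (v : V) : Finset V :=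
  univ.filter (fun u => u = v ∨ G.Adj v u)

/-- The closed neighborhood `N[s]` of a finite set `s` of vertices. -/
noncomputable def clNbhdSet {V : Type*} [Fintype V] (G : SimpleGraph V) (s : Finset V) : Finset V :=
  s.biUnion (clNbhd G)

/-- A maximal clique of a graph: a clique not properly contained in any other clique. -/
def IsMaxClique {V : Type*} (G : SimpleGraph V) (C : Finset V) : Prop :=
  G.IsClique (C : Set V) ∧ ∀ D : Finset V, G.IsClique (D : Set V) → C ⊆ D → D = C

/-- A vertex is simplicial if its closed neighborhood is a maximal clique. -/
def IsSimplicialVertex {V : Type*} [Fintype V] (G : SimpleGraph V) (v : V) : Prop :=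
  IsMaxClique G (clNbhd G v)

/-- A simplicial clique: a maximal clique containing at least one simplicial vertex. -/
def IsSimplicialClique {V : Type*} [Fintype V] (G : SimpleGraph V) (C : Finset V) : Prop :=
  IsMaxClique G C ∧ ∃ v ∈ C, IsSimplicialVertex G v

/-- The set `C(G)` of simplicial cliques of `G`. -/
noncomputable def simpCliques {V : Type*} [Fintype V] (G : SimpleGraph V) : Finset (Finset V) :=
  univ.filter (fun C => IsSimplicialClique G C)

/-- The simplicial clique number `sc(G) = |C(G)|`. -/
noncomputable def scNum {V : Type*} [Fintype V] (G : SimpleGraph V) : ℕ :=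
  (simpCliques G).card

/-- A simplicial clique covered graph (SCCG): `C(G)` is nonempty and the union of the
simplicial cliques is the whole vertex set. -/
def IsSCCG {V : Type*} [Fintype V] (G : SimpleGraph V) : Prop :=
  (simpCliques G).Nonempty ∧ ∀ v : V, ∃ C ∈ simpCliques G, v ∈ C

/-- The connection set `W` of `G`: vertices belonging to at least two simplicial cliques. -/
noncomputable def connSet {V : Type*} [Fintype V] (G : SimpleGraph V) : Finset V :=
  univ.filter (fun v => 1 < ((simpCliques G).filter (fun C => v ∈ C)).card)

/-- `S(I)`: the set of simplicial cliques not contained in the closed neighborhood `N[I]`. -/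
noncomputable def sFam {V : Type*} [Fintype V] (G : SimpleGraph V) (I : Finset V) :
    Finset (Finset V) :=
  (simpCliques G).filter (fun C => ¬ C ⊆ clNbhdSet G I)

/-- An independent set of vertices: no two of its vertices are adjacent. -/
def IsIndep {V : Type*} (G : SimpleGraph V) (s : Finset V) : Prop :=
  ∀ u ∈ s, ∀ w ∈ s, ¬ G.Adj u w

/-- A maximal independent set: an independent set not properly contained in any
other independent set. -/
def IsMaxIndep {V : Type*} (G : SimpleGraph V) (s : Finset V) : Prop :=
  IsIndep G s ∧ ∀ t : Finset V, IsIndep G t → s ⊆ t → t = s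

/-- A well-covered weighting: a weighting whose sum over every maximal independent set
is the same. -/
def IsWCW {V : Type*} (G : SimpleGraph V) {F : Type*} [Field F] (f : V → F) : Prop :=
  ∀ s t : Finset V, IsMaxIndep G s → IsMaxIndep G t →
    ∑ v ∈ s, f v = ∑ v ∈ t, f v

/-- The well-covered space of `G` over `F`: the `F`-vector space of well-covered
weightings of `G`. -/
noncomputable def wcSpace {V : Type*} (G : SimpleGraph V) (F : Type*) [Field F] :
    Submodule F (V → F) where
  carrier := {f | IsWCW G f}
  zero_mem' := by
    intro s t _ _
    simp
  add_mem' := by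
    intro f g hf hg
    simp only [Set.mem_setOf_eq] at hf hg ⊢
    intro s t hs ht
    simp only [Pi.add_apply, Finset.sum_add_distrib]
    rw [hf s t hs ht, hg s t hs ht]
  smul_mem' := by
    intro c f hf
    simp only [Set.mem_setOf_eq] at hf ⊢
    intro s t hs ht
    simp only [Pi.smul_apply, smul_eq_mul, ← Finset.mul_sum]
    rw [hf s t hs ht]

/-- The well-covered dimension `wcdim(G, F)`. -/
noncomputable def wcdim {V : Type*} (G : SimpleGraph V) (F : Type*) [Field F] : ℕ :=
  Module.finrank F (wcSpace G F)

section Aux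

variable {V : Type*} [Fintype V] {G : SimpleGraph V}

lemma mem_clNbhd_iff (G : SimpleGraph V) (v x : V) :
    x ∈ clNbhd G v ↔ x = v ∨ G.Adj v x := by
  simp [clNbhd]

lemma self_mem_clNbhd (G : SimpleGraph V) (v : V) : v ∈ clNbhd G v := by
  simp [clNbhd]

lemma mem_clNbhd_comm {v x : V} : x ∈ clNbhd G v ↔ v ∈ clNbhd G x := by
  simp only [mem_clNbhd_iff]
  constructor
  · rintro (h | h)
    exacts [Or.inl h.symm, Or.inr h.symm]
  · rintro (h | h)
    exacts [Or.inl h.symm, Or.inr h.symm]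

lemma clique_subset_clNbhd {D : Finset V} (hD : G.IsClique (D : Set V))
    {w : V} (hw : w ∈ D) : D ⊆ clNbhd G w := by
  intro z hz
  rw [mem_clNbhd_iff]
  by_cases h : z = w
  · exact Or.inl h
  · exact Or.inr (hD (by exact_mod_cast hw) (by exact_mod_cast hz) (Ne.symm h))

lemma simplicial_clNbhd_eq {D : Finset V} (hD : IsMaxClique G D) {x : V}
    (hx : x ∈ D) (hxs : IsSimplicialVertex G x) : clNbhd G x = D :=
  hD.2 _ hxs.1 (clique_subset_clNbhd hD.1 hx)

lemma mem_connSet_of_two {C D : Finset V} (hC : C ∈ simpCliques G)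
    (hD : D ∈ simpCliques G) (hne : C ≠ D) {u : V} (huC : u ∈ C) (huD : u ∈ D) :
    u ∈ connSet G := by
  simp only [connSet, mem_filter, mem_univ, true_and]
  have hsub : ({C, D} : Finset (Finset V)) ⊆ (simpCliques G).filter (fun E => u ∈ E) := by
    intro E hE
    simp only [mem_insert, mem_singleton] at hE
    rcases hE with rfl | rfl
    · exact mem_filter.2 ⟨hC, huC⟩
    · exact mem_filter.2 ⟨hD, huD⟩
  have h2 : ({C, D} : Finset (Finset V)).card = 2 := by
    rw [card_insert_of_notMem (by simpa using hne), card_singleton]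
  calc 1 < ({C, D} : Finset (Finset V)).card := by omega
    _ ≤ _ := card_le_card hsub

/-- Key lemma: `insert u I` is a maximal independent set. -/
lemma key_maxIndep {C : Finset V} (hC : C ∈ simpCliques G) {u v : V}
    (hu : u ∈ C) (hv : v ∈ C) (huW : u ∉ connSet G) (hvW : v ∉ connSet G)
    (hadj : G.Adj u v) {I : Finset V} (hIind : IsIndep G I)
    (hIuv : ∀ i ∈ I, i ∉ clNbhd G u ∧ i ∉ clNbhd G v)
    (hcover : ∀ z : V, ∃ D ∈ simpCliques G, z ∈ D ∧ ∀ y ∈ D,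
      y ∈ clNbhd G u ∨ y ∈ clNbhd G v ∨ ∃ i ∈ I, y ∈ clNbhd G i) :
    IsMaxIndep G (insert u I) := by
  have hCclique : G.IsClique (C : Set V) := ((mem_filter.1 hC).2).1.1
  have hindep : IsIndep G (insert u I) := by
    intro a ha b hb
    rw [mem_insert] at ha hb
    rcases ha with rfl | ha <;> rcases hb with rfl | hb
    · exact G.irrefl
    · intro h
      exact (hIuv b hb).1 ((mem_clNbhd_iff G a b).2 (Or.inr h))
    · intro h
      exact (hIuv a ha).1 ((mem_clNbhd_iff G b a).2 (Or.inr h.symm))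
    · exact hIind a ha b hb
  refine ⟨hindep, ?_⟩
  intro t ht hsub
  refine Subset.antisymm ?_ hsub
  intro z hz
  by_contra hzM
  rw [mem_insert] at hzM
  push_neg at hzM
  obtain ⟨hzu, hzI⟩ := hzM
  have hut : u ∈ t := hsub (mem_insert_self _ _)
  have hzadju : ¬ G.Adj u z := ht u hut z hz
  have hzadjI : ∀ i ∈ I, ¬ G.Adj i z := fun i hi => ht i (hsub (mem_insert_of_mem hi)) z hz
  obtain ⟨D, hD, hzD, hDcov⟩ := hcover z
  rcases hDcov z hzD with h | h | ⟨i, hi, h⟩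
  · rcases (mem_clNbhd_iff G u z).1 h with rfl | h
    · exact hzu rfl
    · exact hzadju h
  · rcases (mem_clNbhd_iff G v z).1 h with rfl | h
    · exact hzadju hadj
    · -- z ∉ C, since otherwise z adjacent to u
      have hzC : z ∉ C := by
        intro hzC
        exact hzadju (hCclique (by exact_mod_cast hu) (by exact_mod_cast hzC) (Ne.symm hzu))
      have hDC : C ≠ D := fun hEq => hzC (hEq ▸ hzD)
      have huD : u ∉ D := fun huD => huW (mem_connSet_of_two hC hD hDC hu huD)
      have hvD : v ∉ D := fun hvD => hvW (mem_connSet_of_two hC hD hDC hv hvD)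
      obtain ⟨hDmax, x, hxD, hxs⟩ := (mem_filter.1 hD).2
      have hNx : clNbhd G x = D := simplicial_clNbhd_eq hDmax hxD hxs
      rcases hDcov x hxD with hx | hx | ⟨i, hi, hx⟩
      · exact huD (hNx ▸ mem_clNbhd_comm.1 hx)
      · exact hvD (hNx ▸ mem_clNbhd_comm.1 hx)
      · have hiD : i ∈ D := hNx ▸ mem_clNbhd_comm.1 hx
        have hzNi : z ∈ clNbhd G i := clique_subset_clNbhd hDmax.1 hiD hzD
        rcases (mem_clNbhd_iff G i z).1 hzNi with rfl | h'
        · exact hzI hi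
        · exact hzadjI i hi h'
  · rcases (mem_clNbhd_iff G i z).1 h with rfl | h
    · exact hzI hi
    · exact hzadjI i hi h

end Aux

/-- Any well-covered weighting of a SCCG is constant on `Cᵢ - Wᵢ`
(the set of simplicial vertices of `Cᵢ`) for every simplicial clique `Cᵢ`. -/
theorem sccg_wcw_constant_on_cliques {V : Type*} [Fintype V] (G : SimpleGraph V)
    (hconn : G.Connected) (hG : IsSCCG G) {F : Type*} [Field F] (f : V → F)
    (hf : IsWCW G f) :
    ∀ C ∈ simpCliques G, ∀ u ∈ C \ connSet G, ∀ v ∈ C \ connSet G, f u = f v := by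
  intro C hC u hu' v hv'
  rw [mem_sdiff] at hu' hv'
  obtain ⟨hu, huW⟩ := hu'
  obtain ⟨hv, hvW⟩ := hv'
  by_cases huv : u = v
  · rw [huv]
  have hCclique : G.IsClique (C : Set V) := ((mem_filter.1 hC).2).1.1
  have hadj : G.Adj u v := hCclique (by exact_mod_cast hu) (by exact_mod_cast hv) huv
  -- choose a maximum-cardinality independent set of simplicial vertices avoiding N[u] ∪ N[v]
  set P : Finset V → Prop := fun I => IsIndep G I ∧ (∀ i ∈ I, IsSimplicialVertex G i) ∧
      ∀ i ∈ I, i ∉ clNbhd G u ∧ i ∉ clNbhd G v with hP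
  set s : Finset (Finset V) := univ.filter P with hs
  have hne : s.Nonempty := ⟨∅, by simp [hs, hP, IsIndep]⟩
  obtain ⟨I, hIs, hImax⟩ := Finset.exists_max_image s card hne
  obtain ⟨hIind, hIsimp, hIuv⟩ : P I := (mem_filter.1 hIs).2
  -- cover property
  have hcover : ∀ z : V, ∃ D ∈ simpCliques G, z ∈ D ∧ ∀ y ∈ D,
      y ∈ clNbhd G u ∨ y ∈ clNbhd G v ∨ ∃ i ∈ I, y ∈ clNbhd G i := by
    intro z
    obtain ⟨D, hD, hzD⟩ := hG.2 z
    refine ⟨D, hD, hzD, ?_⟩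
    by_contra hcon
    push_neg at hcon
    obtain ⟨y, hyD, hyu, hyv, hyI⟩ := hcon
    obtain ⟨hDmax, x, hxD, hxs⟩ := (mem_filter.1 hD).2
    have hNx : clNbhd G x = D := simplicial_clNbhd_eq hDmax hxD hxs
    have hxu : x ∉ clNbhd G u := by
      intro hx
      exact hyu (clique_subset_clNbhd hDmax.1 (hNx ▸ mem_clNbhd_comm.1 hx) hyD)
    have hxv : x ∉ clNbhd G v := by
      intro hx
      exact hyv (clique_subset_clNbhd hDmax.1 (hNx ▸ mem_clNbhd_comm.1 hx) hyD)
    have hxI : ∀ i ∈ I, x ∉ clNbhd G i := by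
      intro i hi hx
      exact hyI i hi (clique_subset_clNbhd hDmax.1 (hNx ▸ mem_clNbhd_comm.1 hx) hyD)
    have hxnotI : x ∉ I := fun hx => hxI x hx (self_mem_clNbhd G x)
    have hI' : P (insert x I) := by
      refine ⟨?_, ?_, ?_⟩
      · intro a ha b hb
        rw [mem_insert] at ha hb
        rcases ha with rfl | ha <;> rcases hb with rfl | hb
        · exact G.irrefl
        · intro h
          exact hxI b hb ((mem_clNbhd_iff G b a).2 (Or.inr h.symm))
        · intro h
          exact hxI a ha ((mem_clNbhd_iff G a b).2 (Or.inr h))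
        · exact hIind a ha b hb
      · intro i hi
        rcases mem_insert.1 hi with rfl | hi
        · exact hxs
        · exact hIsimp i hi
      · intro i hi
        rcases mem_insert.1 hi with rfl | hi
        · exact ⟨hxu, hxv⟩
        · exact hIuv i hi
    have hle : (insert x I).card ≤ I.card :=
      hImax _ (mem_filter.2 ⟨mem_univ _, hI'⟩)
    rw [card_insert_of_notMem hxnotI] at hle
    omega
  have hcover' : ∀ z : V, ∃ D ∈ simpCliques G, z ∈ D ∧ ∀ y ∈ D,
      y ∈ clNbhd G v ∨ y ∈ clNbhd G u ∨ ∃ i ∈ I, y ∈ clNbhd G i := by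
    intro z
    obtain ⟨D, hD, hzD, h⟩ := hcover z
    refine ⟨D, hD, hzD, fun y hy => ?_⟩
    rcases h y hy with h' | h' | h'
    exacts [Or.inr (Or.inl h'), Or.inl h', Or.inr (Or.inr h')]
  have hM1 : IsMaxIndep G (insert u I) :=
    key_maxIndep hC hu hv huW hvW hadj hIind hIuv hcover
  have hM2 : IsMaxIndep G (insert v I) :=
    key_maxIndep hC hv hu hvW huW hadj.symm hIind
      (fun i hi => ⟨(hIuv i hi).2, (hIuv i hi).1⟩) hcover'
  have hsum := hf _ _ hM1 hM2
  have huI : u ∉ I := fun h => (hIuv u h).1 (self_mem_clNbhd G u)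
  have hvI : v ∉ I := fun h => (hIuv v h).2 (self_mem_clNbhd G v)
  rw [sum_insert huI, sum_insert hvI] at hsum
  exact add_right_cancel hsum
end

section
/- Let G be a simplicial clique covered graph (SCCG) and let F be any field. Then the well-covered dimension of G over F equals the simplicial clique number: wcdim(G, F) = sc(G). -/
open Finset

open scoped Classical

section Aux

variable {V : Type*} [Fintype V] (G : SimpleGraph V)

lemma mem_clNbhd' {v u : V} : u ∈ clNbhd G v ↔ u = v ∨ G.Adj v u := by
  simp [clNbhd]

lemma clique_subset_clNbhd_s4 {C : Finset V} (hC : G.IsClique (C : Set V)) {v : V} (hv : v ∈ C) :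
    C ⊆ clNbhd G v := by
  intro u hu
  rw [mem_clNbhd']
  rcases eq_or_ne u v with h | h
  · exact Or.inl h
  · exact Or.inr (hC (by exact_mod_cast hv) (by exact_mod_cast hu) (Ne.symm h))

lemma mem_simpCliques {C : Finset V} : C ∈ simpCliques G ↔ IsSimplicialClique G C := by
  simp [simpCliques]

lemma maxclique_eq_clNbhd {C : Finset V} (hC : IsMaxClique G C) {v : V}
    (hv : v ∈ C) (hsv : IsSimplicialVertex G v) : C = clNbhd G v :=
  (hC.2 _ hsv.1 (clique_subset_clNbhd_s4 G hC.1 hv)).symm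

lemma simpClique_unique {C D : Finset V} (hC : C ∈ simpCliques G) (hD : D ∈ simpCliques G)
    {v : V} (hvC : v ∈ C) (hvD : v ∈ D) (hsv : IsSimplicialVertex G v) : C = D := by
  rw [mem_simpCliques] at hC hD
  rw [maxclique_eq_clNbhd G hC.1 hvC hsv, maxclique_eq_clNbhd G hD.1 hvD hsv]

lemma exists_mis_superset {I : Finset V} (hI : IsIndep G I) :
    ∃ M, IsMaxIndep G M ∧ I ⊆ M := by
  obtain ⟨M, hM, hmax⟩ := Finset.exists_max_image ((univ : Finset (Finset V)).filter
      (fun s => IsIndep G s ∧ I ⊆ s)) Finset.card ⟨I, by simp [hI]⟩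
  simp only [mem_filter, mem_univ, true_and] at hM
  refine ⟨M, ⟨hM.1, ?_⟩, hM.2⟩
  intro t ht hsub
  refine (Finset.eq_of_subset_of_card_le hsub (hmax t ?_)).symm
  simp only [mem_filter, mem_univ, true_and]
  exact ⟨ht, hM.2.trans hsub⟩

lemma mis_inter_simpClique {M C : Finset V} (hM : IsMaxIndep G M) (hC : C ∈ simpCliques G) :
    ∃ m, M ∩ C = {m} := by
  obtain ⟨hCmax, v, hvC, hsv⟩ := (mem_simpCliques G).mp hC
  have hCeq : C = clNbhd G v := maxclique_eq_clNbhd G hCmax hvC hsv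
  -- existence of an element of M ∩ C
  have hex : ∃ m ∈ M, m ∈ C := by
    by_contra h
    push_neg at h
    have hvM : v ∉ M := fun hv => h v hv hvC
    have hind : IsIndep G (insert v M) := by
      intro x hx y hy hadj
      rcases Finset.mem_insert.mp hx with rfl | hxM
      · rcases Finset.mem_insert.mp hy with rfl | hyM
        · exact G.irrefl hadj
        · exact h y hyM (by rw [hCeq, mem_clNbhd']; exact Or.inr hadj)
      · rcases Finset.mem_insert.mp hy with rfl | hyM
        · exact h x hxM (by rw [hCeq, mem_clNbhd']; exact Or.inr hadj.symm)
        · exact hM.1 x hxM y hyM hadj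
    have := hM.2 _ hind (Finset.subset_insert _ _)
    exact hvM (this ▸ Finset.mem_insert_self v M)
  obtain ⟨m, hmM, hmC⟩ := hex
  refine ⟨m, ?_⟩
  ext x
  simp only [Finset.mem_inter, Finset.mem_singleton]
  constructor
  · rintro ⟨hxM, hxC⟩
    by_contra hne
    exact hM.1 x hxM m hmM (hCmax.1 (by exact_mod_cast hxC) (by exact_mod_cast hmC) hne)
  · rintro rfl
    exact ⟨hmM, hmC⟩

lemma mis_sum_indicator {F : Type*} [Field F] {M C : Finset V}
    (hM : IsMaxIndep G M) (hC : C ∈ simpCliques G) :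
    ∑ x ∈ M, (if x ∈ C then (1 : F) else 0) = 1 := by
  obtain ⟨m, hm⟩ := mis_inter_simpClique G hM hC
  rw [← Finset.sum_filter, Finset.filter_mem_eq_inter, hm, Finset.sum_singleton]

/-- Key injectivity lemma: a well-covered weighting vanishing at a chosen simplicial
vertex of every simplicial clique vanishes identically. -/
lemma wcw_eq_zero {F : Type*} [Field F] {f : V → F} (hf : IsWCW G f)
    (hG : IsSCCG G) (vch : Finset V → V)
    (hvch : ∀ C ∈ simpCliques G, vch C ∈ C ∧ IsSimplicialVertex G (vch C))
    (h0 : ∀ C ∈ simpCliques G, f (vch C) = 0) : ∀ u, f u = 0 := by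
  -- the chosen vertex of C lies only in C among simplicial cliques
  have key : ∀ C ∈ simpCliques G, ∀ D ∈ simpCliques G, vch C ∈ D → D = C := by
    intro C hC D hD hmem
    exact simpClique_unique G hD hC hmem (hvch C hC).1 (hvch C hC).2
  -- the set of chosen vertices is independent
  have hS0ind : IsIndep G ((simpCliques G).image vch) := by
    intro x hx y hy hadj
    obtain ⟨C, hC, rfl⟩ := Finset.mem_image.mp hx
    obtain ⟨D, hD, rfl⟩ := Finset.mem_image.mp hy
    have hmem : vch D ∈ clNbhd G (vch C) := by
      rw [mem_clNbhd']; exact Or.inr hadj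
    have hCeq : C = clNbhd G (vch C) :=
      maxclique_eq_clNbhd G ((mem_simpCliques G).mp hC).1 (hvch C hC).1 (hvch C hC).2
    have : C = D := key D hD C hC (hCeq ▸ hmem)
    subst this
    exact G.irrefl hadj
  -- a maximal independent set consisting exactly of the chosen vertices
  obtain ⟨M0, hM0, hS0M0⟩ := exists_mis_superset G hS0ind
  have hM0eq : M0 = (simpCliques G).image vch := by
    apply Finset.Subset.antisymm _ hS0M0
    intro m hm
    obtain ⟨E, hE, hmE⟩ := hG.2 m
    obtain ⟨x, hx⟩ := mis_inter_simpClique G hM0 hE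
    have h1 : m ∈ M0 ∩ E := Finset.mem_inter.mpr ⟨hm, hmE⟩
    have h2 : vch E ∈ M0 ∩ E :=
      Finset.mem_inter.mpr ⟨hS0M0 (Finset.mem_image_of_mem _ hE), (hvch E hE).1⟩
    rw [hx, Finset.mem_singleton] at h1 h2
    rw [h1, ← h2]
    exact Finset.mem_image_of_mem _ hE
  have hvchinj : ∀ C ∈ simpCliques G, ∀ D ∈ simpCliques G, vch C = vch D → C = D := by
    intro C hC D hD h
    refine key D hD C hC ?_
    rw [← h]
    exact (hvch C hC).1
  have hM0sum : ∑ v ∈ M0, f v = 0 := by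
    rw [hM0eq, Finset.sum_image hvchinj]
    exact Finset.sum_eq_zero h0
  -- now fix u and build a maximal independent set whose sum is f u
  intro u
  set A' : Finset (Finset V) := (simpCliques G).filter (fun D => u ∉ D) with hA'
  have hA'sub : A' ⊆ simpCliques G := Finset.filter_subset _ _
  have hunotim : u ∉ A'.image vch := by
    intro h
    obtain ⟨D, hD, hDeq⟩ := Finset.mem_image.mp h
    have := (Finset.mem_filter.mp hD).2
    exact this (hDeq ▸ (hvch D (hA'sub hD)).1)
  have hIind : IsIndep G (insert u (A'.image vch)) := by
    intro x hx y hy hadj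
    have haux : ∀ D ∈ A', ¬ G.Adj u (vch D) := by
      intro D hD hadj'
      have hDs := hA'sub hD
      have hDeq : D = clNbhd G (vch D) :=
        maxclique_eq_clNbhd G ((mem_simpCliques G).mp hDs).1 (hvch D hDs).1 (hvch D hDs).2
      have : u ∈ D := by
        rw [hDeq, mem_clNbhd']; exact Or.inr hadj'.symm
      exact (Finset.mem_filter.mp hD).2 this
    rcases Finset.mem_insert.mp hx with rfl | hxim
    · rcases Finset.mem_insert.mp hy with rfl | hyim
      · exact G.irrefl hadj
      · obtain ⟨D, hD, rfl⟩ := Finset.mem_image.mp hyim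
        exact haux D hD hadj
    · rcases Finset.mem_insert.mp hy with rfl | hyim
      · obtain ⟨D, hD, rfl⟩ := Finset.mem_image.mp hxim
        exact haux D hD hadj.symm
      · exact hS0ind x (Finset.image_subset_image hA'sub hxim) y
          (Finset.image_subset_image hA'sub hyim) hadj
  obtain ⟨M, hM, hIM⟩ := exists_mis_superset G hIind
  have hMeq : M = insert u (A'.image vch) := by
    apply Finset.Subset.antisymm _ hIM
    intro m hm
    obtain ⟨E, hE, hmE⟩ := hG.2 m
    obtain ⟨x, hx⟩ := mis_inter_simpClique G hM hE
    have h1 : m ∈ M ∩ E := Finset.mem_inter.mpr ⟨hm, hmE⟩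
    rw [hx, Finset.mem_singleton] at h1
    by_cases huE : u ∈ E
    · have h2 : u ∈ M ∩ E :=
        Finset.mem_inter.mpr ⟨hIM (Finset.mem_insert_self _ _), huE⟩
      rw [hx, Finset.mem_singleton] at h2
      rw [h1, ← h2]
      exact Finset.mem_insert_self _ _
    · have hEA' : E ∈ A' := Finset.mem_filter.mpr ⟨hE, huE⟩
      have h2 : vch E ∈ M ∩ E := Finset.mem_inter.mpr
        ⟨hIM (Finset.mem_insert_of_mem (Finset.mem_image_of_mem _ hEA')), (hvch E hE).1⟩
      rw [hx, Finset.mem_singleton] at h2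
      rw [h1, ← h2]
      exact Finset.mem_insert_of_mem (Finset.mem_image_of_mem _ hEA')
  have hMsum : ∑ v ∈ M, f v = f u := by
    rw [hMeq, Finset.sum_insert hunotim,
      Finset.sum_image (fun C hC D hD h => hvchinj C (hA'sub hC) D (hA'sub hD) h)]
    rw [Finset.sum_eq_zero (fun D hD => h0 D (hA'sub hD)), add_zero]
  have := hf M M0 hM hM0
  rw [hMsum, hM0sum] at this
  exact this

end Aux

/-- The well-covered dimension of a SCCG equals its simplicial clique
number, over any field. -/
theorem sccg_wcdim_eq_sc {V : Type*} [Fintype V] (G : SimpleGraph V)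
    (hconn : G.Connected) (hG : IsSCCG G) (F : Type*) [Field F] :
    wcdim G F = scNum G := by
  classical
  -- pick a base vertex to serve as junk value
  obtain ⟨C0, hC0⟩ := hG.1
  obtain ⟨v0, hv0, _⟩ := ((mem_simpCliques G).mp hC0).2
  -- choose a simplicial vertex in each simplicial clique
  set vch : Finset V → V := fun C =>
    if h : C ∈ simpCliques G then ((mem_simpCliques G).mp h).2.choose else v0 with hvchdef
  have hvch : ∀ C ∈ simpCliques G, vch C ∈ C ∧ IsSimplicialVertex G (vch C) := by
    intro C hC
    simp only [hvchdef, dif_pos hC]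
    exact ((mem_simpCliques G).mp hC).2.choose_spec
  have key : ∀ C ∈ simpCliques G, ∀ D ∈ simpCliques G, vch C ∈ D → D = C := by
    intro C hC D hD hmem
    exact simpClique_unique G hD hC hmem (hvch C hC).1 (hvch C hC).2
  -- the evaluation linear map
  let φ : wcSpace G F →ₗ[F] ({C // C ∈ simpCliques G} → F) :=
    { toFun := fun f C => (f : V → F) (vch C.1)
      map_add' := fun f g => rfl
      map_smul' := fun c f => rfl }
  have hinj : Function.Injective φ := by
    intro f g h
    have hd : (↑(f - g) : V → F) ∈ wcSpace G F := (f - g).2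
    have hz : ∀ C ∈ simpCliques G, (↑(f - g) : V → F) (vch C) = 0 := by
      intro C hC
      have h1 := congrFun h ⟨C, hC⟩
      have h2 : (f : V → F) (vch C) = (g : V → F) (vch C) := h1
      show (↑f - ↑g : V → F) (vch C) = 0
      simp only [Pi.sub_apply, h2, sub_self]
    have := wcw_eq_zero G hd hG vch hvch hz
    apply Subtype.ext
    funext u
    have h1 := this u
    have h2 : (↑f - ↑g : V → F) u = 0 := h1
    simp only [Pi.sub_apply] at h2
    exact sub_eq_zero.mp h2
  have hsurj : Function.Surjective φ := by
    intro a
    set f0 : V → F := fun v =>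
      ∑ C ∈ (simpCliques G).attach, a C * (if v ∈ C.1 then 1 else 0) with hf0
    have hf0mem : f0 ∈ wcSpace G F := by
      intro s t hs ht
      have hsum : ∀ M : Finset V, IsMaxIndep G M →
          ∑ v ∈ M, f0 v = ∑ C ∈ (simpCliques G).attach, a C := by
        intro M hM
        simp only [hf0]
        rw [Finset.sum_comm]
        refine Finset.sum_congr rfl fun C _ => ?_
        rw [← Finset.mul_sum, mis_sum_indicator G hM C.2, mul_one]
      rw [hsum s hs, hsum t ht]
    refine ⟨⟨f0, hf0mem⟩, ?_⟩
    funext C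
    show f0 (vch C.1) = a C
    simp only [hf0]
    rw [Finset.sum_eq_single C]
    · rw [if_pos (hvch C.1 C.2).1, mul_one]
    · intro D _ hDC
      rw [if_neg, mul_zero]
      intro hmem
      exact hDC (Subtype.ext (key C.1 C.2 D.1 D.2 hmem))
    · intro h
      exact absurd (Finset.mem_attach _ C) h
  have e : wcSpace G F ≃ₗ[F] ({C // C ∈ simpCliques G} → F) :=
    LinearEquiv.ofBijective φ ⟨hinj, hsurj⟩
  rw [wcdim, e.finrank_eq, Module.finrank_fintype_fun_eq_card, Fintype.card_coe, scNum]
end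

section
/- Let 𝒢 be the simplicial clique sum (SCS) of G_1 and G_2. Then a set M ⊆ V(𝒢) is a maximal independent set of 𝒢 if and only if M = M_1 ∪ M_2, where M_1 is a maximal independent set of G_1, M_2 is a maximal independent set of G_2, and M_1 ∩ M_2 = {v} for some vertex v ∈ V(G_1) ∩ V(G_2). -/
open Finset

open scoped Classical

/-- The finset of vertices of a subgraph `H` that lie in a given set `s` of ambient
vertices, viewed as vertices of `H`. -/
noncomputable def restrictToSub {V : Type*} [Fintype V] {𝒢 : SimpleGraph V}
    (H : 𝒢.Subgraph) (s : Set V) : Finset ↥H.verts :=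
  univ.filter (fun x => (x : V) ∈ s)

/-- `𝒢` is the simplicial clique sum (SCS) of its subgraphs `H₁` and `H₂`:
their simplicial clique sets are nonempty, their vertex sets cover `V(𝒢)`, their edge
sets cover `E(𝒢)`, and `V(H₁) ∩ V(H₂)` is a simplicial clique of `H₁`, of `H₂`, and
of `𝒢`. -/
def IsSCS {V : Type*} [Fintype V] (𝒢 : SimpleGraph V) (H₁ H₂ : 𝒢.Subgraph) : Prop :=
  (simpCliques H₁.coe).Nonempty ∧ (simpCliques H₂.coe).Nonempty ∧
  H₁.verts ∪ H₂.verts = Set.univ ∧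
  H₁.edgeSet ∪ H₂.edgeSet = 𝒢.edgeSet ∧
  IsSimplicialClique H₁.coe (restrictToSub H₁ (H₁.verts ∩ H₂.verts)) ∧
  IsSimplicialClique H₂.coe (restrictToSub H₂ (H₁.verts ∩ H₂.verts)) ∧
  IsSimplicialClique 𝒢 (H₁.verts ∩ H₂.verts).toFinset

/-- A chordal graph: no induced cycles of length at least 4. -/
def IsChordal {V : Type*} (G : SimpleGraph V) : Prop :=
  ∀ n : ℕ, 4 ≤ n → IsEmpty (SimpleGraph.cycleGraph n ↪g G)

/-!
A maximal independent set is an independent set dominating every vertex outside it, and it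
meets every simplicial clique `C = N[w]` (it contains `w` or a neighbour of `w`). Hence a
maximal independent set `M` of the sum contains exactly one vertex `v` of the shared clique
`S = V(G₁) ∩ V(G₂)`, and `M ∩ V(Gᵢ)` is maximal in `Gᵢ`: a vertex of `Gᵢ` dominated by `M`
only through the other part lies in `S`, so it is adjacent to `v` inside `Gᵢ`. Conversely,
`M₁ ∪ M₂` restricts to `Mᵢ` on `V(Gᵢ)`, since `Mⱼ` meets `S` only in `v`, and a set whose
restrictions to both parts are maximal independent is maximal independent in the sum, because
every edge and every vertex of the sum lies in one of the parts.
-/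

section MaximalIndependentSets

variable {V : Type*} {G : SimpleGraph V}

theorem isMaxIndep_iff_forall_exists_adj {s : Finset V} :
    IsMaxIndep G s ↔ IsIndep G s ∧ ∀ x ∉ s, ∃ u ∈ s, G.Adj x u := by
  refine ⟨fun hs => ⟨hs.1, fun x hx => ?_⟩, fun ⟨hs, hdom⟩ => ⟨hs, fun t ht hst => ?_⟩⟩
  · by_contra! hnadj
    have hind : IsIndep G (insert x s) := by
      intro a ha b hb hab
      rcases Finset.mem_insert.mp ha with rfl | ha' <;>
        rcases Finset.mem_insert.mp hb with rfl | hb'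
      · exact G.loopless.irrefl _ hab
      · exact hnadj b hb' hab
      · exact hnadj a ha' hab.symm
      · exact hs.1 a ha' b hb' hab
    exact hx (hs.2 _ hind (Finset.subset_insert x s) ▸ Finset.mem_insert_self x s)
  · refine (hst.antisymm fun x hxt => ?_).symm
    by_contra hxs
    obtain ⟨u, hus, hxu⟩ := hdom x hxs
    exact ht x hxt u (hst hus) hxu

theorem IsIndep.eq_of_mem_of_isClique {s C : Finset V} (hs : IsIndep G s)
    (hC : G.IsClique (C : Set V)) {a b : V} (has : a ∈ s) (hbs : b ∈ s) (haC : a ∈ C)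
    (hbC : b ∈ C) : a = b := by
  by_contra hab
  exact hs a has b hbs (hC haC hbC hab)

theorem IsSimplicialClique.exists_mem_of_isMaxIndep [Fintype V] {C M : Finset V}
    (hC : IsSimplicialClique G C) (hM : IsMaxIndep G M) : ∃ v ∈ M, v ∈ C := by
  obtain ⟨hCmax, w, hwC, hw⟩ := hC
  have hC_sub : C ⊆ clNbhd G w := fun u huC => by
    simpa [clNbhd, or_iff_not_imp_left, eq_comm] using fun huw => hCmax.1 hwC huC huw
  have hnbhd : clNbhd G w = C := hCmax.2 _ hw.1 hC_sub
  by_cases hwM : w ∈ M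
  · exact ⟨w, hwM, hwC⟩
  · obtain ⟨u, huM, hwu⟩ := (isMaxIndep_iff_forall_exists_adj.mp hM).2 w hwM
    exact ⟨u, huM, hnbhd ▸ by simp [clNbhd, hwu]⟩

end MaximalIndependentSets

section Restriction

variable {V : Type*} [Fintype V] {𝒢 : SimpleGraph V}

@[simp]
theorem mem_restrictToSub {H : 𝒢.Subgraph} {s : Set V} {x : ↥H.verts} :
    x ∈ restrictToSub H s ↔ (x : V) ∈ s := by
  simp [restrictToSub]

theorem image_val_restrictToSub (H : 𝒢.Subgraph) (s : Finset V) :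
    (restrictToSub H s).image Subtype.val = s.filter (· ∈ H.verts) := by
  ext u
  simp only [Finset.mem_image, mem_restrictToSub, Finset.mem_coe, Finset.mem_filter]
  exact ⟨fun ⟨x, hx, hxu⟩ => hxu ▸ ⟨hx, x.2⟩, fun ⟨hu, huH⟩ => ⟨⟨u, huH⟩, hu, rfl⟩⟩

theorem IsMaxIndep.restrictToSub_of_mem_inter {H K : 𝒢.Subgraph} {M : Finset V}
    (hM : IsMaxIndep 𝒢 M) (hedges : H.edgeSet ∪ K.edgeSet = 𝒢.edgeSet)
    (hS : H.coe.IsClique (restrictToSub H (H.verts ∩ K.verts) : Set ↥H.verts))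
    {v : V} (hvM : v ∈ M) (hvH : v ∈ H.verts) (hvK : v ∈ K.verts) :
    IsMaxIndep H.coe (restrictToSub H M) := by
  rw [isMaxIndep_iff_forall_exists_adj] at hM ⊢
  refine ⟨fun a ha b hb hab => ?_, fun x hx => ?_⟩
  · rw [mem_restrictToSub] at ha hb
    exact hM.1 _ ha _ hb (H.coe_adj_sub a b hab)
  rw [mem_restrictToSub] at hx
  obtain ⟨u, huM, hxu⟩ := hM.2 x hx
  have hxu : s(↑x, u) ∈ H.edgeSet ∪ K.edgeSet := hedges ▸ hxu
  rcases hxu with hxuH | hxuK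
  · exact ⟨⟨u, hxuH.snd_mem⟩, mem_restrictToSub.mpr huM, hxuH⟩
  -- `x` is dominated through `K`, so it lies in the shared clique together with `v`.
  exact ⟨⟨v, hvH⟩, mem_restrictToSub.mpr hvM, hS (mem_restrictToSub.mpr ⟨x.2, hxuK.fst_mem⟩)
    (mem_restrictToSub.mpr ⟨hvH, hvK⟩) fun hxv => hx (hxv ▸ hvM)⟩

theorem isMaxIndep_of_restrictToSub {H K : 𝒢.Subgraph} {M : Finset V}
    (hcover : H.verts ∪ K.verts = Set.univ) (hedges : H.edgeSet ∪ K.edgeSet = 𝒢.edgeSet)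
    (hMH : IsMaxIndep H.coe (restrictToSub H M)) (hMK : IsMaxIndep K.coe (restrictToSub K M)) :
    IsMaxIndep 𝒢 M := by
  rw [isMaxIndep_iff_forall_exists_adj] at hMH hMK ⊢
  refine ⟨fun u hu w hw huw => ?_, fun x hx => ?_⟩
  · have huw : s(u, w) ∈ H.edgeSet ∪ K.edgeSet := hedges ▸ huw
    rcases huw with huwH | huwK
    · exact hMH.1 ⟨u, huwH.fst_mem⟩ (mem_restrictToSub.mpr hu) ⟨w, huwH.snd_mem⟩
        (mem_restrictToSub.mpr hw) huwH
    · exact hMK.1 ⟨u, huwK.fst_mem⟩ (mem_restrictToSub.mpr hu) ⟨w, huwK.snd_mem⟩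
        (mem_restrictToSub.mpr hw) huwK
  · have hx' : x ∈ H.verts ∪ K.verts := hcover ▸ Set.mem_univ x
    rcases hx' with hxH | hxK
    · obtain ⟨u, hu, hxu⟩ := hMH.2 ⟨x, hxH⟩ (mt mem_restrictToSub.mp hx)
      exact ⟨u, mem_restrictToSub.mp hu, H.coe_adj_sub _ _ hxu⟩
    · obtain ⟨u, hu, hxu⟩ := hMK.2 ⟨x, hxK⟩ (mt mem_restrictToSub.mp hx)
      exact ⟨u, mem_restrictToSub.mp hu, K.coe_adj_sub _ _ hxu⟩

theorem restrictToSub_union_image_val {H K : 𝒢.Subgraph} {N : Finset ↥H.verts}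
    {P : Finset ↥K.verts} (hP : IsIndep K.coe P)
    (hS : K.coe.IsClique (restrictToSub K (K.verts ∩ H.verts) : Set ↥K.verts))
    {v : V} (hvN : v ∈ N.image Subtype.val) (hvP : v ∈ P.image Subtype.val) :
    restrictToSub H (N.image Subtype.val ∪ P.image Subtype.val : Finset V) = N := by
  obtain ⟨b₀, hb₀P, rfl⟩ := Finset.mem_image.mp hvP
  obtain ⟨a₀, ha₀N, ha₀b₀⟩ := Finset.mem_image.mp hvN
  ext x
  simp only [mem_restrictToSub, Finset.coe_union, Set.mem_union, Finset.mem_coe,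
    Finset.mem_image, Subtype.val_inj, exists_eq_right, or_iff_left_iff_imp]
  rintro ⟨b, hbP, hbx⟩
  have hb : b = b₀ := hP.eq_of_mem_of_isClique hS hbP hb₀P
    (mem_restrictToSub.mpr ⟨b.2, hbx ▸ x.2⟩) (mem_restrictToSub.mpr ⟨b₀.2, ha₀b₀ ▸ a₀.2⟩)
  have hx : x = a₀ := Subtype.ext (by rw [← hbx, hb, ha₀b₀])
  exact hx ▸ ha₀N

end Restriction

theorem scs_mis_iff_general {V : Type*} [Fintype V] (𝒢 : SimpleGraph V)
    (H₁ H₂ : 𝒢.Subgraph) (hscs : IsSCS 𝒢 H₁ H₂) (M : Finset V) :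
    IsMaxIndep 𝒢 M ↔
      ∃ (M₁ : Finset ↥H₁.verts) (M₂ : Finset ↥H₂.verts),
        IsMaxIndep H₁.coe M₁ ∧ IsMaxIndep H₂.coe M₂ ∧
        M = M₁.image Subtype.val ∪ M₂.image Subtype.val ∧
        ∃ v : V, v ∈ H₁.verts ∩ H₂.verts ∧
          M₁.image Subtype.val ∩ M₂.image Subtype.val = {v} := by
  obtain ⟨-, -, hcover, hedges, ⟨⟨hS₁, -⟩, -⟩, ⟨⟨hS₂, -⟩, -⟩, hS⟩ := hscs
  have hedges' : H₂.edgeSet ∪ H₁.edgeSet = 𝒢.edgeSet := Set.union_comm _ _ ▸ hedges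
  rw [Set.inter_comm] at hS₂
  constructor
  · intro hM
    obtain ⟨v, hvM, hvS⟩ := hS.exists_mem_of_isMaxIndep hM
    have hv : v ∈ H₁.verts ∩ H₂.verts := Set.mem_toFinset.mp hvS
    refine ⟨_, _, hM.restrictToSub_of_mem_inter hedges hS₁ hvM hv.1 hv.2,
      hM.restrictToSub_of_mem_inter hedges' hS₂ hvM hv.2 hv.1, ?_, v, hv, ?_⟩
    · ext u
      have hu : u ∈ H₁.verts ∨ u ∈ H₂.verts := by rw [← Set.mem_union, hcover]; trivial
      simp only [image_val_restrictToSub, Finset.mem_union, Finset.mem_filter]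
      tauto
    · ext u
      simp only [image_val_restrictToSub, Finset.mem_inter, Finset.mem_filter,
        Finset.mem_singleton]
      exact ⟨fun ⟨⟨huM, huH₁⟩, _, huH₂⟩ => hM.1.eq_of_mem_of_isClique hS.1.1 huM hvM
        (Set.mem_toFinset.mpr ⟨huH₁, huH₂⟩) hvS, fun hu => hu ▸ ⟨⟨hvM, hv.1⟩, hvM, hv.2⟩⟩
  · rintro ⟨M₁, M₂, hM₁, hM₂, rfl, v, -, hinter⟩
    have hv₁₂ : v ∈ M₁.image Subtype.val ∧ v ∈ M₂.image Subtype.val :=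
      Finset.mem_inter.mp (hinter ▸ Finset.mem_singleton_self v)
    refine isMaxIndep_of_restrictToSub hcover hedges ?_ ?_
    · rwa [restrictToSub_union_image_val hM₂.1 hS₂ hv₁₂.1 hv₁₂.2]
    · rwa [Finset.union_comm, restrictToSub_union_image_val hM₁.1 hS₁ hv₁₂.2 hv₁₂.1]

/-- A set `M` is a maximal independent set of a simplicial clique sum
`𝒢` of `G₁` and `G₂` if and only if `M = M₁ ∪ M₂` with `M₁` a maximal independent set
of `G₁`, `M₂` a maximal independent set of `G₂`, and `M₁ ∩ M₂ = {v}` for some vertex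
`v ∈ V(G₁) ∩ V(G₂)`. -/
theorem scs_mis_iff {V : Type*} [Fintype V] (𝒢 : SimpleGraph V)
    (hconn : 𝒢.Connected) (H₁ H₂ : 𝒢.Subgraph) (hscs : IsSCS 𝒢 H₁ H₂) (M : Finset V) :
    IsMaxIndep 𝒢 M ↔
      ∃ (M₁ : Finset ↥H₁.verts) (M₂ : Finset ↥H₂.verts),
        IsMaxIndep H₁.coe M₁ ∧ IsMaxIndep H₂.coe M₂ ∧
        M = M₁.image Subtype.val ∪ M₂.image Subtype.val ∧
        ∃ v : V, v ∈ H₁.verts ∩ H₂.verts ∧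
          M₁.image Subtype.val ∩ M₂.image Subtype.val = {v} :=
  scs_mis_iff_general 𝒢 H₁ H₂ hscs M
end

section
/- Let 𝒢 be the simplicial clique sum (SCS) of G_1 and G_2, let c = |V(G_1) ∩ V(G_2)|, and enumerate V(G_1) ∩ V(G_2) = {v_1, …, v_c}. For each i, let l_i be the number of maximal independent sets of G_1 containing v_i and m_i be the number of maximal independent sets of G_2 containing v_i. Then 𝒢 has exactly Σ_{i=1}^{c} l_i · m_i maximal independent sets. -/
open Finset

open scoped Classical

/-- A simplicial clique sum `𝒢` of `G₁` and `G₂` has exactly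
`Σ_{v ∈ V(G₁) ∩ V(G₂)} l(v)·m(v)` maximal independent sets, where `l(v)` (resp. `m(v)`)
is the number of maximal independent sets of `G₁` (resp. `G₂`) containing `v`. -/
theorem scs_count_mis {V : Type*} [Fintype V] (𝒢 : SimpleGraph V)
    (hconn : 𝒢.Connected) (H₁ H₂ : 𝒢.Subgraph) (hscs : IsSCS 𝒢 H₁ H₂) :
    (univ.filter (fun s : Finset V => IsMaxIndep 𝒢 s)).card =
      ∑ v ∈ (H₁.verts ∩ H₂.verts).toFinset,
        (univ.filter (fun s : Finset ↥H₁.verts =>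
            IsMaxIndep H₁.coe s ∧ v ∈ s.image Subtype.val)).card *
        (univ.filter (fun s : Finset ↥H₂.verts =>
            IsMaxIndep H₂.coe s ∧ v ∈ s.image Subtype.val)).card := by
  classical
  obtain ⟨-, -, hV, hE, hC1, hC2, hCG⟩ := hscs
  set C : Finset V := (H₁.verts ∩ H₂.verts).toFinset with hCdef
  have hmemC : ∀ x : V, x ∈ C ↔ x ∈ H₁.verts ∧ x ∈ H₂.verts := by
    intro x; simp [hCdef, Set.mem_inter_iff]
  have hadj_cases : ∀ {x y : V}, 𝒢.Adj x y → H₁.Adj x y ∨ H₂.Adj x y := by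
    intro x y h
    have h2 : s(x, y) ∈ H₁.edgeSet ∪ H₂.edgeSet := by
      rw [hE]; exact h
    rcases h2 with h' | h'
    · exact Or.inl h'
    · exact Or.inr h'
  have hV12 : ∀ x : V, x ∈ H₁.verts ∨ x ∈ H₂.verts := by
    intro x
    have hx : x ∈ H₁.verts ∪ H₂.verts := by rw [hV]; trivial
    exact hx
  -- C is a clique of 𝒢
  have hCclique : ∀ x ∈ C, ∀ y ∈ C, x ≠ y → 𝒢.Adj x y := by
    intro x hx y hy hxy
    have := hCG.1.1
    exact this (by simpa [hCdef] using hx) (by simpa [hCdef] using hy) hxy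
  -- C restricted to H₁ is a clique of H₁.coe
  have hclique1 : ∀ a b : ↥H₁.verts, (↑a : V) ∈ C → (↑b : V) ∈ C → a ≠ b →
      H₁.coe.Adj a b := by
    intro a b ha hb hab
    have hcl := hC1.1.1
    have ha' : a ∈ restrictToSub H₁ (H₁.verts ∩ H₂.verts) := by
      simp only [restrictToSub, mem_filter, mem_univ, true_and]
      rw [hmemC] at ha; exact ⟨ha.1, ha.2⟩
    have hb' : b ∈ restrictToSub H₁ (H₁.verts ∩ H₂.verts) := by
      simp only [restrictToSub, mem_filter, mem_univ, true_and]
      rw [hmemC] at hb; exact ⟨hb.1, hb.2⟩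
    exact hcl (by exact_mod_cast ha') (by exact_mod_cast hb') hab
  have hclique2 : ∀ a b : ↥H₂.verts, (↑a : V) ∈ C → (↑b : V) ∈ C → a ≠ b →
      H₂.coe.Adj a b := by
    intro a b ha hb hab
    have hcl := hC2.1.1
    have ha' : a ∈ restrictToSub H₂ (H₁.verts ∩ H₂.verts) := by
      simp only [restrictToSub, mem_filter, mem_univ, true_and]
      rw [hmemC] at ha; exact ⟨ha.1, ha.2⟩
    have hb' : b ∈ restrictToSub H₂ (H₁.verts ∩ H₂.verts) := by
      simp only [restrictToSub, mem_filter, mem_univ, true_and]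
      rw [hmemC] at hb; exact ⟨hb.1, hb.2⟩
    exact hcl (by exact_mod_cast ha') (by exact_mod_cast hb') hab
  -- every MIS of 𝒢 meets C
  have hmeet : ∀ S : Finset V, IsMaxIndep 𝒢 S → ∃ v ∈ S, v ∈ C := by
    intro S hS
    obtain ⟨hCmax, w, hwC, hw⟩ := id hCG
    -- clNbhd 𝒢 w = C
    have hsub : C ⊆ clNbhd 𝒢 w := by
      intro x hx
      simp only [clNbhd, mem_filter, mem_univ, true_and]
      by_cases hxw : x = w
      · exact Or.inl hxw
      · exact Or.inr ((hCclique w hwC x hx (Ne.symm hxw)))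
    have hNC : clNbhd 𝒢 w = C := hCmax.2 _ hw.1 hsub
    by_contra hcon
    push_neg at hcon
    have hwS : w ∉ S := fun hwS => hcon w hwS hwC
    have hno : ∀ y ∈ S, ¬ 𝒢.Adj w y := by
      intro y hy hadj
      have hy' : y ∈ clNbhd 𝒢 w := by
        simp only [clNbhd, mem_filter, mem_univ, true_and]; exact Or.inr hadj
      rw [hNC] at hy'
      exact hcon y hy hy'
    have hind : IsIndep 𝒢 (insert w S) := by
      intro u hu x hx
      rcases mem_insert.mp hu with rfl | hu'
      · rcases mem_insert.mp hx with rfl | hx'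
        · exact fun h => (𝒢.irrefl h)
        · exact hno x hx'
      · rcases mem_insert.mp hx with rfl | hx'
        · exact fun h => hno u hu' h.symm
        · exact hS.1 u hu' x hx'
    have := hS.2 _ hind (subset_insert _ _)
    have hwS' : w ∈ S := by rw [← this]; exact mem_insert_self _ _
    exact hwS hwS'
  -- uniqueness within an independent set crossing C for H₁ side
  have huniq1 : ∀ (S₁ : Finset ↥H₁.verts) (v : V), IsIndep H₁.coe S₁ →
      v ∈ S₁.image Subtype.val → v ∈ C →
      ∀ x ∈ S₁.image Subtype.val, x ∈ H₂.verts → x = v := by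
    intro S₁ v hind hv hvC x hx hx2
    obtain ⟨a, ha, rfl⟩ := mem_image.mp hx
    obtain ⟨b, hb, rfl⟩ := mem_image.mp hv
    by_contra hne
    have hab : a ≠ b := fun h => hne (by rw [h])
    have haC : (↑a : V) ∈ C := (hmemC _).mpr ⟨a.2, hx2⟩
    exact hind a ha b hb (hclique1 a b haC hvC hab)
  have huniq2 : ∀ (S₂ : Finset ↥H₂.verts) (v : V), IsIndep H₂.coe S₂ →
      v ∈ S₂.image Subtype.val → v ∈ C →
      ∀ x ∈ S₂.image Subtype.val, x ∈ H₁.verts → x = v := by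
    intro S₂ v hind hv hvC x hx hx1
    obtain ⟨a, ha, rfl⟩ := mem_image.mp hx
    obtain ⟨b, hb, rfl⟩ := mem_image.mp hv
    by_contra hne
    have hab : a ≠ b := fun h => hne (by rw [h])
    have haC : (↑a : V) ∈ C := (hmemC _).mpr ⟨hx1, a.2⟩
    exact hind a ha b hb (hclique2 a b haC hvC hab)
  -- abbreviations
  set A : V → Finset (Finset ↥H₁.verts) := fun v => univ.filter
    (fun s : Finset ↥H₁.verts => IsMaxIndep H₁.coe s ∧ v ∈ s.image Subtype.val) with hA
  set B : V → Finset (Finset ↥H₂.verts) := fun v => univ.filter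
    (fun s : Finset ↥H₂.verts => IsMaxIndep H₂.coe s ∧ v ∈ s.image Subtype.val) with hB
  have hrhs : ∑ v ∈ C, (A v).card * (B v).card
      = (C.sigma (fun v => A v ×ˢ B v)).card := by
    rw [Finset.card_sigma]
    exact Finset.sum_congr rfl fun v _ => (Finset.card_product _ _).symm
  rw [hrhs]
  symm
  apply Finset.card_bij (fun p _ => (p.2.1.image Subtype.val) ∪ (p.2.2.image Subtype.val))
  · -- maps into MIS of 𝒢
    rintro ⟨v, S₁, S₂⟩ hp
    rw [Finset.mem_sigma] at hp
    obtain ⟨hvC, hp⟩ := hp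
    rw [Finset.mem_product] at hp
    obtain ⟨hS₁, hS₂⟩ := hp
    rw [hA, mem_filter] at hS₁
    rw [hB, mem_filter] at hS₂
    obtain ⟨-, hS₁m, hvS₁⟩ := hS₁
    obtain ⟨-, hS₂m, hvS₂⟩ := hS₂
    dsimp only at hvC hS₁m hvS₁ hS₂m hvS₂ ⊢
    simp only [mem_filter, mem_univ, true_and]
    set U : Finset V := (S₁.image Subtype.val) ∪ (S₂.image Subtype.val) with hU
    have hU1 : ∀ x ∈ U, x ∈ H₁.verts → x ∈ S₁.image Subtype.val := by
      intro x hx hx1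
      rcases mem_union.mp hx with h | h
      · exact h
      · have hx2 : x ∈ H₂.verts := by
          obtain ⟨a, -, rfl⟩ := mem_image.mp h
          exact a.2
        have := huniq2 S₂ v hS₂m.1 hvS₂ hvC x h hx1
        rw [this]; exact hvS₁
    have hU2 : ∀ x ∈ U, x ∈ H₂.verts → x ∈ S₂.image Subtype.val := by
      intro x hx hx2
      rcases mem_union.mp hx with h | h
      · have hx1 : x ∈ H₁.verts := by
          obtain ⟨a, -, rfl⟩ := mem_image.mp h
          exact a.2
        have := huniq1 S₁ v hS₁m.1 hvS₁ hvC x h hx2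
        rw [this]; exact hvS₂
      · exact h
    have hUind : IsIndep 𝒢 U := by
      intro x hx y hy hadj
      rcases hadj_cases hadj with h | h
      · obtain ⟨a, ha, rfl⟩ := mem_image.mp (hU1 x hx h.fst_mem)
        obtain ⟨b, hb, rfl⟩ := mem_image.mp (hU1 y hy h.snd_mem)
        exact hS₁m.1 a ha b hb h
      · obtain ⟨a, ha, rfl⟩ := mem_image.mp (hU2 x hx h.fst_mem)
        obtain ⟨b, hb, rfl⟩ := mem_image.mp (hU2 y hy h.snd_mem)
        exact hS₂m.1 a ha b hb h
    refine ⟨hUind, ?_⟩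
    intro t hti htU
    apply Finset.Subset.antisymm _ htU
    intro x hxt
    by_contra hxU
    rcases hV12 x with hx1 | hx2
    · -- x can be added to S₁
      have hxS₁ : (⟨x, hx1⟩ : ↥H₁.verts) ∉ S₁ := by
        intro hmem
        exact hxU (mem_union_left _ (mem_image.mpr ⟨_, hmem, rfl⟩))
      have hind' : IsIndep H₁.coe (insert ⟨x, hx1⟩ S₁) := by
        intro a ha b hb hadj
        rcases mem_insert.mp ha with rfl | ha <;> rcases mem_insert.mp hb with rfl | hb
        · exact H₁.coe.irrefl hadj
        · have hbt : (↑b : V) ∈ t := htU (mem_union_left _ (mem_image.mpr ⟨_, hb, rfl⟩))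
          exact hti x hxt _ hbt hadj.adj_sub
        · have hat : (↑a : V) ∈ t := htU (mem_union_left _ (mem_image.mpr ⟨_, ha, rfl⟩))
          exact hti _ hat x hxt hadj.adj_sub
        · exact hS₁m.1 a ha b hb hadj
      have := hS₁m.2 _ hind' (subset_insert _ _)
      exact hxS₁ (by rw [← this]; exact mem_insert_self _ _)
    · have hxS₂ : (⟨x, hx2⟩ : ↥H₂.verts) ∉ S₂ := by
        intro hmem
        exact hxU (mem_union_right _ (mem_image.mpr ⟨_, hmem, rfl⟩))
      have hind' : IsIndep H₂.coe (insert ⟨x, hx2⟩ S₂) := by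
        intro a ha b hb hadj
        rcases mem_insert.mp ha with rfl | ha <;> rcases mem_insert.mp hb with rfl | hb
        · exact H₂.coe.irrefl hadj
        · have hbt : (↑b : V) ∈ t := htU (mem_union_right _ (mem_image.mpr ⟨_, hb, rfl⟩))
          exact hti x hxt _ hbt hadj.adj_sub
        · have hat : (↑a : V) ∈ t := htU (mem_union_right _ (mem_image.mpr ⟨_, ha, rfl⟩))
          exact hti _ hat x hxt hadj.adj_sub
        · exact hS₂m.1 a ha b hb hadj
      have := hS₂m.2 _ hind' (subset_insert _ _)
      exact hxS₂ (by rw [← this]; exact mem_insert_self _ _)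
  · -- injectivity
    rintro ⟨v, S₁, S₂⟩ hp ⟨w, T₁, T₂⟩ hq heq
    rw [Finset.mem_sigma] at hp hq
    obtain ⟨hvC, hp⟩ := hp
    obtain ⟨hwC, hq⟩ := hq
    rw [Finset.mem_product] at hp hq
    rw [hA, mem_filter] at hp hq
    obtain ⟨⟨-, hS₁m, hvS₁⟩, hS₂'⟩ := hp
    obtain ⟨⟨-, hT₁m, hwT₁⟩, hT₂'⟩ := hq
    rw [hB, mem_filter] at hS₂' hT₂'
    obtain ⟨-, hS₂m, hvS₂⟩ := hS₂'
    obtain ⟨-, hT₂m, hwT₂⟩ := hT₂'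
    dsimp only at hvC hwC hS₁m hvS₁ hS₂m hvS₂ hT₁m hwT₁ hT₂m hwT₂ heq
    -- first v = w
    have hvU : v ∈ (S₁.image Subtype.val) ∪ (S₂.image Subtype.val) :=
      mem_union_left _ hvS₁
    have hwU : w ∈ (S₁.image Subtype.val) ∪ (S₂.image Subtype.val) := by
      rw [heq]; exact mem_union_left _ hwT₁
    have hvw : v = w := by
      by_contra hne
      rcases mem_union.mp hwU with h | h
      · have hw2 : w ∈ H₂.verts := (hmemC w).mp hwC |>.2
        exact hne ((huniq1 S₁ v hS₁m.1 hvS₁ hvC w h hw2).symm)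
      · have hw1 : w ∈ H₁.verts := (hmemC w).mp hwC |>.1
        exact hne ((huniq2 S₂ v hS₂m.1 hvS₂ hvC w h hw1).symm)
    subst hvw
    -- now S₁ = T₁ and S₂ = T₂
    have himg1 : S₁.image Subtype.val = T₁.image Subtype.val := by
      apply Finset.Subset.antisymm
      · intro x hx
        have hx1 : x ∈ H₁.verts := by
          obtain ⟨a, -, rfl⟩ := mem_image.mp hx; exact a.2
        have hxU : x ∈ (T₁.image Subtype.val) ∪ (T₂.image Subtype.val) := by
          rw [← heq]; exact mem_union_left _ hx
        rcases mem_union.mp hxU with h | h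
        · exact h
        · have := huniq2 T₂ v hT₂m.1 hwT₂ hvC x h hx1
          rw [this]; exact hwT₁
      · intro x hx
        have hx1 : x ∈ H₁.verts := by
          obtain ⟨a, -, rfl⟩ := mem_image.mp hx; exact a.2
        have hxU : x ∈ (S₁.image Subtype.val) ∪ (S₂.image Subtype.val) := by
          rw [heq]; exact mem_union_left _ hx
        rcases mem_union.mp hxU with h | h
        · exact h
        · have := huniq2 S₂ v hS₂m.1 hvS₂ hvC x h hx1
          rw [this]; exact hvS₁
    have himg2 : S₂.image Subtype.val = T₂.image Subtype.val := by
      apply Finset.Subset.antisymm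
      · intro x hx
        have hx2 : x ∈ H₂.verts := by
          obtain ⟨a, -, rfl⟩ := mem_image.mp hx; exact a.2
        have hxU : x ∈ (T₁.image Subtype.val) ∪ (T₂.image Subtype.val) := by
          rw [← heq]; exact mem_union_right _ hx
        rcases mem_union.mp hxU with h | h
        · have := huniq1 T₁ v hT₁m.1 hwT₁ hvC x h hx2
          rw [this]; exact hwT₂
        · exact h
      · intro x hx
        have hx2 : x ∈ H₂.verts := by
          obtain ⟨a, -, rfl⟩ := mem_image.mp hx; exact a.2
        have hxU : x ∈ (S₁.image Subtype.val) ∪ (S₂.image Subtype.val) := by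
          rw [heq]; exact mem_union_right _ hx
        rcases mem_union.mp hxU with h | h
        · have := huniq1 S₁ v hS₁m.1 hvS₁ hvC x h hx2
          rw [this]; exact hvS₂
        · exact h
    have h1 : S₁ = T₁ := Finset.image_injective Subtype.val_injective himg1
    have h2 : S₂ = T₂ := Finset.image_injective Subtype.val_injective himg2
    subst h1; subst h2; rfl
  · -- surjectivity
    intro S hS
    rw [mem_filter] at hS
    obtain ⟨-, hSm⟩ := hS
    obtain ⟨v, hvS, hvC⟩ := hmeet S hSm
    refine ⟨⟨v, restrictToSub H₁ (↑S), restrictToSub H₂ (↑S)⟩, ?_, ?_⟩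
    · rw [Finset.mem_sigma, Finset.mem_product]
      have hmem1 : ∀ a : ↥H₁.verts, a ∈ restrictToSub H₁ (↑S) ↔ (↑a : V) ∈ S := by
        intro a; simp [restrictToSub]
      have hmem2 : ∀ a : ↥H₂.verts, a ∈ restrictToSub H₂ (↑S) ↔ (↑a : V) ∈ S := by
        intro a; simp [restrictToSub]
      have hv1 : v ∈ H₁.verts := ((hmemC v).mp hvC).1
      have hv2 : v ∈ H₂.verts := ((hmemC v).mp hvC).2
      refine ⟨hvC, ?_, ?_⟩
      · rw [hA, mem_filter]
        refine ⟨mem_univ _, ⟨?_, ?_⟩, ?_⟩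
        · intro a ha b hb hadj
          exact hSm.1 _ ((hmem1 a).mp ha) _ ((hmem1 b).mp hb) hadj.adj_sub
        · intro t hti hsub
          apply Finset.Subset.antisymm _ hsub
          intro x hxt
          rw [hmem1]
          by_contra hxS
          have hind : IsIndep 𝒢 (insert ↑x S) := by
            intro a ha b hb hadj
            rcases mem_insert.mp ha with rfl | ha <;> rcases mem_insert.mp hb with rfl | hb
            · exact 𝒢.irrefl hadj
            · -- a = ↑x, b ∈ S
              rcases hadj_cases hadj with h | h
              · have hb1 : b ∈ H₁.verts := h.snd_mem
                have hbt : (⟨b, hb1⟩ : ↥H₁.verts) ∈ t :=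
                  hsub ((hmem1 _).mpr hb)
                exact hti x hxt _ hbt h
              · -- edge in H₂, so ↑x ∈ C
                have hx2 : (↑x : V) ∈ H₂.verts := h.fst_mem
                have hxC : (↑x : V) ∈ C := (hmemC _).mpr ⟨x.2, hx2⟩
                by_cases hxv : (↑x : V) = v
                · exact hSm.1 _ (hxv ▸ hvS) b hb (hxv ▸ hadj) |>.elim
                · have hvt : (⟨v, hv1⟩ : ↥H₁.verts) ∈ t := hsub ((hmem1 _).mpr hvS)
                  have : H₁.coe.Adj x ⟨v, hv1⟩ :=
                    hclique1 x ⟨v, hv1⟩ hxC hvC (fun h' => hxv (congrArg Subtype.val h'))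
                  exact hti x hxt _ hvt this
            · rcases hadj_cases hadj with h | h
              · have ha1 : a ∈ H₁.verts := h.fst_mem
                have hat : (⟨a, ha1⟩ : ↥H₁.verts) ∈ t := hsub ((hmem1 _).mpr ha)
                exact hti _ hat x hxt h
              · have hx2 : (↑x : V) ∈ H₂.verts := h.snd_mem
                have hxC : (↑x : V) ∈ C := (hmemC _).mpr ⟨x.2, hx2⟩
                by_cases hxv : (↑x : V) = v
                · exact hSm.1 a ha _ (hxv ▸ hvS) (hxv ▸ hadj) |>.elim
                · have hvt : (⟨v, hv1⟩ : ↥H₁.verts) ∈ t := hsub ((hmem1 _).mpr hvS)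
                  have : H₁.coe.Adj x ⟨v, hv1⟩ :=
                    hclique1 x ⟨v, hv1⟩ hxC hvC (fun h' => hxv (congrArg Subtype.val h'))
                  exact hti _ hvt x hxt this.symm
            · exact hSm.1 a ha b hb hadj
          have := hSm.2 _ hind (subset_insert _ _)
          exact hxS (by rw [← this]; exact mem_insert_self _ _)
        · exact mem_image.mpr ⟨⟨v, hv1⟩, (hmem1 _).mpr hvS, rfl⟩
      · rw [hB, mem_filter]
        refine ⟨mem_univ _, ⟨?_, ?_⟩, ?_⟩
        · intro a ha b hb hadj
          exact hSm.1 _ ((hmem2 a).mp ha) _ ((hmem2 b).mp hb) hadj.adj_sub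
        · intro t hti hsub
          apply Finset.Subset.antisymm _ hsub
          intro x hxt
          rw [hmem2]
          by_contra hxS
          have hind : IsIndep 𝒢 (insert ↑x S) := by
            intro a ha b hb hadj
            rcases mem_insert.mp ha with rfl | ha <;> rcases mem_insert.mp hb with rfl | hb
            · exact 𝒢.irrefl hadj
            · rcases hadj_cases hadj with h | h
              · have hx1 : (↑x : V) ∈ H₁.verts := h.fst_mem
                have hxC : (↑x : V) ∈ C := (hmemC _).mpr ⟨hx1, x.2⟩
                by_cases hxv : (↑x : V) = v
                · exact hSm.1 _ (hxv ▸ hvS) b hb (hxv ▸ hadj) |>.elim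
                · have hvt : (⟨v, hv2⟩ : ↥H₂.verts) ∈ t := hsub ((hmem2 _).mpr hvS)
                  have : H₂.coe.Adj x ⟨v, hv2⟩ :=
                    hclique2 x ⟨v, hv2⟩ hxC hvC (fun h' => hxv (congrArg Subtype.val h'))
                  exact hti x hxt _ hvt this
              · have hb2 : b ∈ H₂.verts := h.snd_mem
                have hbt : (⟨b, hb2⟩ : ↥H₂.verts) ∈ t := hsub ((hmem2 _).mpr hb)
                exact hti x hxt _ hbt h
            · rcases hadj_cases hadj with h | h
              · have hx1 : (↑x : V) ∈ H₁.verts := h.snd_mem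
                have hxC : (↑x : V) ∈ C := (hmemC _).mpr ⟨hx1, x.2⟩
                by_cases hxv : (↑x : V) = v
                · exact hSm.1 a ha _ (hxv ▸ hvS) (hxv ▸ hadj) |>.elim
                · have hvt : (⟨v, hv2⟩ : ↥H₂.verts) ∈ t := hsub ((hmem2 _).mpr hvS)
                  have : H₂.coe.Adj x ⟨v, hv2⟩ :=
                    hclique2 x ⟨v, hv2⟩ hxC hvC (fun h' => hxv (congrArg Subtype.val h'))
                  exact hti _ hvt x hxt this.symm
              · have ha2 : a ∈ H₂.verts := h.fst_mem
                have hat : (⟨a, ha2⟩ : ↥H₂.verts) ∈ t := hsub ((hmem2 _).mpr ha)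
                exact hti _ hat x hxt h
            · exact hSm.1 a ha b hb hadj
          have := hSm.2 _ hind (subset_insert _ _)
          exact hxS (by rw [← this]; exact mem_insert_self _ _)
        · exact mem_image.mpr ⟨⟨v, hv2⟩, (hmem2 _).mpr hvS, rfl⟩
    · -- union of images equals S
      simp only
      apply Finset.Subset.antisymm
      · intro x hx
        rcases mem_union.mp hx with h | h
        · obtain ⟨a, ha, rfl⟩ := mem_image.mp h
          simpa [restrictToSub] using ha
        · obtain ⟨a, ha, rfl⟩ := mem_image.mp h
          simpa [restrictToSub] using ha
      · intro x hx
        rcases hV12 x with h1 | h2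
        · exact mem_union_left _ (mem_image.mpr ⟨⟨x, h1⟩, by simpa [restrictToSub] using hx, rfl⟩)
        · exact mem_union_right _ (mem_image.mpr ⟨⟨x, h2⟩, by simpa [restrictToSub] using hx, rfl⟩)
end

section
/- Let n ≥ 5, let P_n be the path graph on vertices v_1, v_2, …, v_n (with edges v_i v_{i+1} for 1 ≤ i ≤ n−1), let F be a field, and let f be a well-covered weighting of P_n over F. Then f(v_1) = f(v_2), f(v_{n−1}) = f(v_n), and f(v_i) = 0 for all i with 3 ≤ i ≤ n−2; that is, f is constant on each of the two simplicial cliques {v_1, v_2} and {v_{n−1}, v_n} of P_n and zero at all remaining vertices. -/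
open Finset

open scoped Classical

section PathWCWAux

open Finset
open scoped Classical

private lemma maxIndep_of_pred (n : ℕ) (P : ℕ → Prop) [DecidablePred P]
    (hind : ∀ a, P a → ¬ P (a + 1))
    (hdom : ∀ a, a < n → P a ∨ (0 < a ∧ P (a - 1)) ∨ (a + 1 < n ∧ P (a + 1))) :
    IsMaxIndep (SimpleGraph.pathGraph n) (univ.filter (fun i : Fin n => P i.val)) := by
  constructor
  · intro u hu w hw hadj
    simp only [mem_filter, mem_univ, true_and] at hu hw
    rw [SimpleGraph.pathGraph_adj] at hadj
    rcases hadj with h | h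
    · exact hind u.val hu (h ▸ hw)
    · exact hind w.val hw (h ▸ hu)
  · intro t ht hsub
    ext x
    simp only [mem_filter, mem_univ, true_and]
    constructor
    · intro hx
      by_contra hPx
      rcases hdom x.val x.isLt with h | ⟨hpos, h⟩ | ⟨hlt, h⟩
      · exact hPx h
      · refine ht x hx ⟨x.val - 1, by omega⟩ (hsub ?_) ?_
        · simp only [mem_filter, mem_univ, true_and]; exact h
        · rw [SimpleGraph.pathGraph_adj]; right; simp; omega
      · refine ht x hx ⟨x.val + 1, hlt⟩ (hsub ?_) ?_
        · simp only [mem_filter, mem_univ, true_and]; exact h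
        · rw [SimpleGraph.pathGraph_adj]; left; simp
    · intro hx
      exact hsub (by simp only [mem_filter, mem_univ, true_and]; exact hx)

private lemma sum_filter_or_eq {n : ℕ} {F : Type*} [AddCommMonoid F] (f : Fin n → F)
    (a : ℕ) (ha : a < n) (C : ℕ → Prop) [DecidablePred C] (hC : ¬ C a) :
    ∑ v ∈ univ.filter (fun i : Fin n => i.val = a ∨ C i.val), f v
      = f ⟨a, ha⟩ + ∑ v ∈ univ.filter (fun i : Fin n => C i.val), f v := by
  have h : (univ.filter (fun i : Fin n => i.val = a ∨ C i.val))
      = insert ⟨a, ha⟩ (univ.filter fun i : Fin n => C i.val) := by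
    ext x
    simp only [mem_filter, mem_univ, true_and, mem_insert, Fin.ext_iff]
  rw [h, sum_insert (by simp [hC])]

private lemma wcw_swap (n : ℕ) {F : Type*} [Field F] (f : Fin n → F)
    (hf : IsWCW (SimpleGraph.pathGraph n) f)
    (a b : ℕ) (ha : a < n) (hb : b < n) (C : ℕ → Prop) [DecidablePred C]
    (hCa : ¬ C a) (hCb : ¬ C b)
    (hind1 : ∀ x, (x = a ∨ C x) → ¬ (x + 1 = a ∨ C (x + 1)))
    (hdom1 : ∀ x, x < n → (x = a ∨ C x) ∨ (0 < x ∧ (x - 1 = a ∨ C (x - 1))) ∨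
      (x + 1 < n ∧ (x + 1 = a ∨ C (x + 1))))
    (hind2 : ∀ x, (x = b ∨ C x) → ¬ (x + 1 = b ∨ C (x + 1)))
    (hdom2 : ∀ x, x < n → (x = b ∨ C x) ∨ (0 < x ∧ (x - 1 = b ∨ C (x - 1))) ∨
      (x + 1 < n ∧ (x + 1 = b ∨ C (x + 1)))) :
    f ⟨a, ha⟩ = f ⟨b, hb⟩ := by
  have h1 : IsMaxIndep (SimpleGraph.pathGraph n)
      (univ.filter (fun i : Fin n => i.val = a ∨ C i.val)) :=
    maxIndep_of_pred n (fun x => x = a ∨ C x) hind1 hdom1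
  have h2 : IsMaxIndep (SimpleGraph.pathGraph n)
      (univ.filter (fun i : Fin n => i.val = b ∨ C i.val)) :=
    maxIndep_of_pred n (fun x => x = b ∨ C x) hind2 hdom2
  have h := hf _ _ h1 h2
  rw [sum_filter_or_eq f a ha C hCa, sum_filter_or_eq f b hb C hCb] at h
  exact add_right_cancel h

end PathWCWAux

/-- For `n ≥ 5`, every well-covered weighting of the path graph `Pₙ`
(with vertices `v₁, …, vₙ`, here `0`-indexed as `Fin n`) agrees on the two vertices of
each end edge and vanishes at all remaining vertices. -/
theorem path_wcw (n : ℕ) (hn : 5 ≤ n) {F : Type*} [Field F] (f : Fin n → F)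
    (hf : IsWCW (SimpleGraph.pathGraph n) f) :
    f ⟨0, by omega⟩ = f ⟨1, by omega⟩ ∧
    f ⟨n - 2, by omega⟩ = f ⟨n - 1, by omega⟩ ∧
    ∀ i : Fin n, 2 ≤ (i : ℕ) → (i : ℕ) ≤ n - 3 → f i = 0 := by
  classical
  -- Claim 1: f v₁ = f v₂
  have h01 : f ⟨0, by omega⟩ = f ⟨1, by omega⟩ := by
    refine wcw_swap n f hf 0 1 (by omega) (by omega)
      (fun x => 3 ≤ x ∧ x % 2 = 1) (by omega) (by omega) ?_ ?_ ?_ ?_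
    · intro x hx; omega
    · intro x hxn; omega
    · intro x hx; omega
    · intro x hxn; omega
  -- Claim 2: f v_{n-1} = f v_n
  have hend : f ⟨n - 2, by omega⟩ = f ⟨n - 1, by omega⟩ := by
    refine wcw_swap n f hf (n - 2) (n - 1) (by omega) (by omega)
      (fun x => x + 4 ≤ n ∧ x % 2 = n % 2) (by omega) (by omega) ?_ ?_ ?_ ?_
    · intro x hx; omega
    · intro x hxn; omega
    · intro x hx; omega
    · intro x hxn; omega
  -- Claim 3a: f v₃ = 0 (index 2)
  have h2zero : f ⟨2, by omega⟩ = 0 := by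
    have hA : IsMaxIndep (SimpleGraph.pathGraph n)
        (univ.filter (fun i : Fin n => i.val = 1 ∨ (4 ≤ i.val ∧ i.val % 2 = 0))) := by
      refine maxIndep_of_pred n (fun x => x = 1 ∨ (4 ≤ x ∧ x % 2 = 0)) ?_ ?_
      · intro x hx; omega
      · intro x hxn; omega
    have hB : IsMaxIndep (SimpleGraph.pathGraph n)
        (univ.filter (fun i : Fin n =>
          i.val = 0 ∨ (i.val = 2 ∨ (4 ≤ i.val ∧ i.val % 2 = 0)))) := by
      refine maxIndep_of_pred n (fun x => x = 0 ∨ (x = 2 ∨ (4 ≤ x ∧ x % 2 = 0))) ?_ ?_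
      · intro x hx; omega
      · intro x hxn; omega
    have h := hf _ _ hA hB
    rw [sum_filter_or_eq f 1 (by omega) (fun x => 4 ≤ x ∧ x % 2 = 0) (by omega),
        sum_filter_or_eq f 0 (by omega) (fun x => x = 2 ∨ (4 ≤ x ∧ x % 2 = 0)) (by omega),
        sum_filter_or_eq f 2 (by omega) (fun x => 4 ≤ x ∧ x % 2 = 0) (by omega),
        ← add_assoc] at h
    have h' : f ⟨1, by omega⟩ = f ⟨0, by omega⟩ + f ⟨2, by omega⟩ := add_right_cancel h
    rw [← h01] at h'
    exact add_eq_left.mp h'.symm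
  -- Claim 3b: the middle values are all equal
  have step : ∀ j, 2 ≤ j → ∀ h4 : j ≤ n - 4, f ⟨j, by omega⟩ = f ⟨j + 1, by omega⟩ := by
    intro j h2 h3
    refine wcw_swap n f hf j (j + 1) (by omega) (by omega)
      (fun x => (x + 2 ≤ j ∧ x % 2 = j % 2) ∨ (j + 3 ≤ x ∧ x % 2 = (j + 3) % 2))
      (by omega) (by omega) ?_ ?_ ?_ ?_
    · intro x hx; omega
    · intro x hxn; omega
    · intro x hx; omega
    · intro x hxn; omega
  have hzero : ∀ j, 2 ≤ j → ∀ h3 : j ≤ n - 3, f ⟨j, by omega⟩ = 0 := by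
    intro j h2
    induction j, h2 using Nat.le_induction with
    | base => intro _; exact h2zero
    | succ k hk ih =>
      intro h3
      have hs := step k hk (by omega)
      have hih := ih (by omega)
      rw [← hih]
      exact hs.symm
  refine ⟨h01, hend, ?_⟩
  intro i h2 h3
  have := hzero i.val h2 h3
  rwa [Fin.eta] at this
end

section
/- Let G be a simplicial clique covered graph (SCCG) with connection set W, and let I_m ⊆ W be an independent set of G. Then I_m is a maximal independent set of G if and only if S(I_m) = ∅, i.e., if and only if every simplicial clique of G is contained in the closed neighborhood N[I_m]. -/
open Finset

open scoped Classical

/-! An independent set is maximal exactly when it dominates the graph, i.e. `N[I] = V`; since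
the simplicial cliques of a SCCG cover `V`, this holds exactly when each of them lies in `N[I]`. -/

section

variable {V : Type*} [Fintype V] (G : SimpleGraph V)

theorem mem_clNbhdSet {s : Finset V} {w : V} :
    w ∈ clNbhdSet G s ↔ ∃ u ∈ s, w = u ∨ G.Adj u w := by
  simp [clNbhdSet, clNbhd]

theorem subset_clNbhdSet (s : Finset V) : s ⊆ clNbhdSet G s :=
  fun u hu => (mem_clNbhdSet G).2 ⟨u, hu, Or.inl rfl⟩

variable {G}

theorem IsIndep.insert {s : Finset V} {w : V} (hs : IsIndep G s) (hw : w ∉ clNbhdSet G s) :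
    IsIndep G (insert w s) := by
  simp only [mem_clNbhdSet, not_exists, not_and, not_or] at hw
  intro a ha b hb hab
  rcases Finset.mem_insert.1 ha with rfl | ha <;> rcases Finset.mem_insert.1 hb with hb | hb
  · exact G.loopless.irrefl a (hb ▸ hab)
  · exact (hw b hb).2 hab.symm
  · exact (hw a ha).2 (hb ▸ hab)
  · exact hs a ha b hb hab

theorem IsIndep.isMaxIndep_iff_clNbhdSet_eq_univ {s : Finset V} (hs : IsIndep G s) :
    IsMaxIndep G s ↔ clNbhdSet G s = univ := by
  constructor
  · intro hmax
    refine eq_univ_of_forall fun w => ?_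
    by_contra hw
    have hins := hmax.2 _ (hs.insert hw) (subset_insert w s)
    exact hw (subset_clNbhdSet G s (hins ▸ mem_insert_self w s))
  · intro hdom
    refine ⟨hs, fun t ht hst => Subset.antisymm (fun w hw => ?_) hst⟩
    obtain ⟨u, hu, rfl | hadj⟩ := (mem_clNbhdSet G).1 (hdom ▸ mem_univ w)
    · exact hu
    · exact absurd hadj (ht u (hst hu) w hw)

theorem IsSCCG.forall_simpCliques_subset_iff (hG : IsSCCG G) (X : Finset V) :
    (∀ C ∈ simpCliques G, C ⊆ X) ↔ X = univ := by
  refine ⟨fun h => eq_univ_of_forall fun v => ?_, fun hX C _ => hX ▸ subset_univ C⟩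
  obtain ⟨C, hC, hvC⟩ := hG.2 v
  exact h C hC hvC

theorem sFam_eq_empty_iff {I : Finset V} :
    sFam G I = ∅ ↔ ∀ C ∈ simpCliques G, C ⊆ clNbhdSet G I := by
  simp [sFam, filter_eq_empty_iff]

end

theorem sccg_indep_mis_iff_general {V : Type*} [Fintype V] (G : SimpleGraph V)
    (hG : IsSCCG G) (I : Finset V)
    (hI : IsIndep G I) :
    (IsMaxIndep G I ↔ sFam G I = ∅) ∧
    (IsMaxIndep G I ↔ ∀ C ∈ simpCliques G, C ⊆ clNbhdSet G I) := by
  have key : IsMaxIndep G I ↔ ∀ C ∈ simpCliques G, C ⊆ clNbhdSet G I := by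
    rw [hG.forall_simpCliques_subset_iff, hI.isMaxIndep_iff_clNbhdSet_eq_univ]
  exact ⟨key.trans sFam_eq_empty_iff.symm, key⟩

/-- For a SCCG `G` and an independent subset `I` of the connection set
`W`, `I` is a maximal independent set of `G` iff `S(I) = ∅`, i.e. iff every simplicial
clique of `G` is contained in the closed neighborhood `N[I]`. -/
theorem sccg_indep_mis_iff {V : Type*} [Fintype V] (G : SimpleGraph V)
    (hconn : G.Connected) (hG : IsSCCG G) (I : Finset V) (hIW : I ⊆ connSet G)
    (hI : IsIndep G I) :
    (IsMaxIndep G I ↔ sFam G I = ∅) ∧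
    (IsMaxIndep G I ↔ ∀ C ∈ simpCliques G, C ⊆ clNbhdSet G I) :=
  sccg_indep_mis_iff_general G hG I hI
end
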